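/- arXiv:2301.06797 — 3 statements merged into one kernel-verified Lean document; each statement's English description precedes it below -/
import Mathlib

section
/- For ψ, φ : [0,∞) → ℝ integrable against exp(−t/s) on [0,∞) for s > 0, the Sawi transform of the convolution (ψ*φ)(t) = ∫₀^t ψ(τ)·φ(t−τ) dτ satisfies Sa[ψ*φ](s) = s²·Sa[ψ](s)·Sa[φ](s). -/
open MeasureTheory Real Set

/-- The Sawi transform of `ψ` at `s`. -/
noncomputable def Sawi (ψ : ℝ → ℝ) (s : ℝ) : ℝ :=
  (1 / s ^ 2) * ∫ t in Ioi (0 : ℝ), ψ t * Real.exp (-t / s)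

/-- Convolution on `[0, ∞)`. -/
noncomputable def conv (ψ φ : ℝ → ℝ) (t : ℝ) : ℝ :=
  ∫ τ in (0 : ℝ)..t, ψ τ * φ (t - τ)

theorem sawi_convolution (ψ φ : ℝ → ℝ) (s : ℝ) (hs : 0 < s)
    (hψ : IntegrableOn (fun t => ψ t * Real.exp (-t / s)) (Ioi (0 : ℝ)))
    (hφ : IntegrableOn (fun t => φ t * Real.exp (-t / s)) (Ioi (0 : ℝ)))
    (hconv : IntegrableOn (fun t => conv ψ φ t * Real.exp (-t / s)) (Ioi (0 : ℝ))) :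
    Sawi (conv ψ φ) s = s ^ 2 * Sawi ψ s * Sawi φ s := by
  have h := integral_posConvolution hψ hφ (ContinuousLinearMap.mul ℝ ℝ)
  have h2 : ∀ x : ℝ,
      (∫ t in (0:ℝ)..x, (ContinuousLinearMap.mul ℝ ℝ) (ψ t * Real.exp (-t / s))
        (φ (x - t) * Real.exp (-(x - t) / s)))
      = conv ψ φ x * Real.exp (-x / s) := by
    intro x
    rw [conv, ← intervalIntegral.integral_mul_const]
    apply intervalIntegral.integral_congr
    intro t _
    have he : Real.exp (-t / s) * Real.exp (-(x - t) / s) = Real.exp (-x / s) := by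
      rw [← Real.exp_add]; congr 1; ring
    simp only [ContinuousLinearMap.mul_apply']
    calc ψ t * Real.exp (-t / s) * (φ (x - t) * Real.exp (-(x - t) / s))
        = ψ t * φ (x - t) * (Real.exp (-t / s) * Real.exp (-(x - t) / s)) := by ring
      _ = ψ t * φ (x - t) * Real.exp (-x / s) := by rw [he]
  simp only [ContinuousLinearMap.mul_apply'] at h2 h
  have h3 : (∫ x in Ioi (0:ℝ), conv ψ φ x * Real.exp (-x / s)) =
      (∫ x in Ioi (0:ℝ), ψ x * Real.exp (-x / s)) *
      (∫ x in Ioi (0:ℝ), φ x * Real.exp (-x / s)) := by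
    rw [← h]
    exact integral_congr_ae (Filter.Eventually.of_forall fun x => (h2 x).symm)
  simp only [Sawi]
  rw [h3]
  have hs' : (s : ℝ) ≠ 0 := ne_of_gt hs
  field_simp
end

section
/- For real α, ρ, γ with α > 0, ρ > 0, and s > 0 with |ω·s^α| < 1, the Sawi transform of t^(ρ−1)·E_{α,ρ}^γ(ω·t^α) equals s^(ρ−2)·(1−ω·s^α)^(−γ), where E_{α,ρ}^γ(z) = Σ_{k=0}^∞ (γ)_k · z^k / (Γ(αk+ρ) · k!) is the three-parameter Mittag-Leffler (Prabhakar) function and (γ)_k is the rising factorial. -/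
open MeasureTheory Real Set

/-- The three-parameter Mittag-Leffler (Prabhakar) function
`E_{α,ρ}^γ(z) = ∑ (γ)_k zᵏ / (Γ(αk+ρ) k!)`. -/
noncomputable def prabhakarML (α ρ γ z : ℝ) : ℝ :=
  ∑' k : ℕ, (ascPochhammer ℝ k).eval γ * z ^ k /
    (Real.Gamma (α * k + ρ) * (Nat.factorial k))

/-!
After expanding the Prabhakar function, the integrand of the Sawi transform is the generalized
power series `∑ cₖ t^(αk+ρ-1) e^(-t/s)` with `cₖ = (γ)ₖ ωᵏ / (Γ(αk+ρ) k!)`. Each term integrates to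
`cₖ s^(αk+ρ) Γ(αk+ρ) = s^ρ (γ)ₖ (ω s^α)ᵏ / k!`, so the Gamma factors cancel. Since the binomial
series converges absolutely for `|ω s^α| < 1`, the integrals of the absolute values are summable,
which justifies integrating term by term; the remaining sum is `s^ρ (1 - ω s^α)^(-γ)`.
-/

open scoped Nat

theorem Real.mem_eball_zero_one_iff {x : ℝ} : x ∈ Metric.eball (0 : ℝ) 1 ↔ |x| < 1 := by
  rw [← ENNReal.ofReal_one, Metric.eball_ofReal]
  simp

theorem Ring.choose_add_sub_one_eq_ascPochhammer_div (γ : ℝ) (n : ℕ) :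
    Ring.choose (γ + n - 1) n = (ascPochhammer ℝ n).eval γ / n ! := by
  rw [Ring.choose_eq_smul, Polynomial.descPochhammer_smeval_eq_ascPochhammer,
    Polynomial.ascPochhammer_smeval_eq_eval, smul_eq_mul, inv_mul_eq_div]
  ring_nf

theorem Real.one_sub_rpow_neg_hasFPowerSeriesOnBall_zero (γ : ℝ) :
    HasFPowerSeriesOnBall (fun x ↦ (1 - x) ^ (-γ))
      (.ofScalars ℝ fun n ↦ (ascPochhammer ℝ n).eval γ / n !) 0 1 := by
  have h := Real.one_div_one_sub_rpow_hasFPowerSeriesOnBall_zero γ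
  simp only [Ring.choose_add_sub_one_eq_ascPochhammer_div] at h
  refine h.congr fun x hx ↦ ?_
  have : 0 ≤ 1 - x := by linarith [(abs_lt.1 (Real.mem_eball_zero_one_iff.1 hx)).2]
  simp only [Real.rpow_neg this, one_div]

theorem Real.hasSum_ascPochhammer_mul_pow_div_factorial (γ : ℝ) {x : ℝ} (hx : |x| < 1) :
    HasSum (fun k ↦ (ascPochhammer ℝ k).eval γ * x ^ k / k !) ((1 - x) ^ (-γ)) := by
  have := (Real.one_sub_rpow_neg_hasFPowerSeriesOnBall_zero γ).hasSum
    (Real.mem_eball_zero_one_iff.2 hx)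
  simp only [FormalMultilinearSeries.ofScalars_apply_eq, smul_eq_mul, zero_add] at this
  simpa only [div_mul_eq_mul_div] using this

theorem Real.summable_norm_ascPochhammer_mul_pow_div_factorial (γ : ℝ) {x : ℝ} (hx : |x| < 1) :
    Summable (fun k ↦ ‖(ascPochhammer ℝ k).eval γ * x ^ k / (k !)‖) := by
  have h := Real.one_sub_rpow_neg_hasFPowerSeriesOnBall_zero γ
  have := FormalMultilinearSeries.summable_norm_apply _
    (Metric.eball_subset_eball h.r_le (Real.mem_eball_zero_one_iff.2 hx))
  simp only [FormalMultilinearSeries.ofScalars_apply_eq, smul_eq_mul] at this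
  simpa only [div_mul_eq_mul_div] using this

theorem integral_rpow_mul_exp_neg_div {A s : ℝ} (hA : 0 < A) (hs : 0 < s) :
    ∫ t in Ioi 0, t ^ (A - 1) * exp (-t / s) = s ^ A * Gamma A := by
  simp_rw [neg_div, div_eq_inv_mul]
  rw [integral_rpow_mul_exp_neg_mul_Ioi hA (inv_pos.2 hs), one_div, inv_inv]

/- A function with nonzero integral is integrable, since Bochner integrals of non-integrable
functions vanish. -/
theorem integrableOn_rpow_mul_exp_neg_div {A s : ℝ} (hA : 0 < A) (hs : 0 < s) :
    IntegrableOn (fun t ↦ t ^ (A - 1) * exp (-t / s)) (Ioi 0) :=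
  .of_integral_ne_zero (by rw [integral_rpow_mul_exp_neg_div hA hs]; positivity)

theorem integral_tsum_mul_rpow_mul_exp_neg_div {c A : ℕ → ℝ} {s : ℝ} (hA : ∀ k, 0 < A k)
    (hs : 0 < s) (hsum : Summable fun k ↦ |c k| * (s ^ A k * Gamma (A k))) :
    ∫ t in Ioi 0, (∑' k, c k * t ^ (A k - 1)) * exp (-t / s) =
      ∑' k, c k * (s ^ A k * Gamma (A k)) := by
  have hint (k : ℕ) : IntegrableOn (fun t ↦ c k * (t ^ (A k - 1) * exp (-t / s))) (Ioi 0) :=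
    (integrableOn_rpow_mul_exp_neg_div (hA k) hs).const_mul (c k)
  have hnorm (k : ℕ) : ∫ t in Ioi 0, ‖c k * (t ^ (A k - 1) * exp (-t / s))‖ =
      |c k| * (s ^ A k * Gamma (A k)) := by
    rw [← integral_rpow_mul_exp_neg_div (hA k) hs, ← integral_const_mul]
    refine setIntegral_congr_fun measurableSet_Ioi fun t (ht : 0 < t) ↦ ?_
    rw [norm_mul, Real.norm_eq_abs, Real.norm_of_nonneg (by positivity)]
  simp_rw [← tsum_mul_right, mul_assoc]
  rw [← integral_tsum_of_summable_integral_norm hint (by simpa only [hnorm] using hsum)]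
  simp_rw [integral_const_mul, integral_rpow_mul_exp_neg_div (hA _) hs]

theorem rpow_sub_one_mul_prabhakarML {α ρ γ ω t : ℝ} (ht : 0 < t) :
    t ^ (ρ - 1) * prabhakarML α ρ γ (ω * t ^ α) =
      ∑' k : ℕ, (ascPochhammer ℝ k).eval γ * ω ^ k / (Gamma (α * k + ρ) * k !) *
        t ^ (α * k + ρ - 1) := by
  rw [prabhakarML, ← tsum_mul_left]
  congr 1 with k
  rw [mul_pow, ← rpow_natCast (t ^ α), ← rpow_mul ht.le, add_sub_assoc, rpow_add ht]
  ring

theorem sawi_prabhakarML (α ρ γ ω s : ℝ) (hα : 0 < α) (hρ : 0 < ρ) (hs : 0 < s)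
    (hω : |ω * s ^ α| < 1) :
    Sawi (fun t => t ^ (ρ - 1) * prabhakarML α ρ γ (ω * t ^ α)) s
      = s ^ (ρ - 2) * (1 - ω * s ^ α) ^ (-γ) := by
  set c : ℕ → ℝ := fun k ↦ (ascPochhammer ℝ k).eval γ * ω ^ k / (Gamma (α * k + ρ) * k !)
  have hA (k : ℕ) : 0 < α * k + ρ := by positivity
  have hterm (k : ℕ) : c k * (s ^ (α * k + ρ) * Gamma (α * k + ρ)) =
      s ^ ρ * ((ascPochhammer ℝ k).eval γ * (ω * s ^ α) ^ k / k !) := by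
    rw [rpow_add hs, rpow_mul hs.le, rpow_natCast]
    simp only [c]
    field_simp [(Gamma_pos_of_pos (hA k)).ne']
    ring
  have hsum : Summable fun k : ℕ ↦ |c k| * (s ^ (α * k + ρ) * Gamma (α * k + ρ)) := by
    refine ((summable_norm_ascPochhammer_mul_pow_div_factorial γ hω).mul_left (s ^ ρ)).congr
      fun k ↦ ?_
    have hpos : 0 < s ^ (α * k + ρ) * Gamma (α * k + ρ) := by positivity
    rw [← abs_of_pos hpos, ← abs_mul, hterm, abs_mul, abs_of_pos (rpow_pos_of_pos hs ρ),
      Real.norm_eq_abs]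
  calc Sawi (fun t => t ^ (ρ - 1) * prabhakarML α ρ γ (ω * t ^ α)) s
      = 1 / s ^ 2 * ∫ t in Ioi 0, (∑' k : ℕ, c k * t ^ (α * k + ρ - 1)) * exp (-t / s) := by
        rw [Sawi]
        congr 1
        exact setIntegral_congr_fun measurableSet_Ioi fun t ht ↦ by
          rw [rpow_sub_one_mul_prabhakarML ht]
    _ = 1 / s ^ 2 * (s ^ ρ * (1 - ω * s ^ α) ^ (-γ)) := by
        rw [integral_tsum_mul_rpow_mul_exp_neg_div (A := fun k : ℕ ↦ α * k + ρ) hA hs hsum,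
          tsum_congr hterm, tsum_mul_left,
          (hasSum_ascPochhammer_mul_pow_div_factorial γ hω).tsum_eq]
    _ = s ^ (ρ - 2) * (1 - ω * s ^ α) ^ (-γ) := by
        rw [rpow_sub hs, rpow_two]
        ring
end

section
/- For a > 0 and ρ > 0: if T(s) = Σ_{n=0}^∞ cₙ·s^(ρn−1) converges for 0 < s < δ with Σ|cₙ|δ^(ρn) < ∞, and cₙ are the Sa-coefficients of ψ(t) = Σ_{n=0}^∞ cₙ·t^(ρn)/Γ(ρn+1), then Sa[ψ](s) = T(s) for 0 < s < δ. -/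
open MeasureTheory Real Set

lemma sawi_aux_integrable {a b : ℝ} (ha : -1 < a) (hb : 0 < b) :
    IntegrableOn (fun t : ℝ => t ^ a * Real.exp (-(b * t))) (Ioi 0) := by
  simpa [Real.rpow_one] using integrableOn_rpow_mul_exp_neg_mul_rpow ha zero_lt_one hb

theorem sawi_termwise_power_series (ρ δ : ℝ) (c : ℕ → ℝ)
    (hρ : 0 < ρ) (hδ : 0 < δ)
    (hsum : Summable (fun n : ℕ => |c n| * δ ^ (ρ * n))) :
    ∀ s : ℝ, 0 < s → s < δ →
      Sawi (fun t => ∑' n : ℕ, c n * t ^ (ρ * n) / Real.Gamma (ρ * n + 1)) s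
        = ∑' n : ℕ, c n * s ^ (ρ * n - 1) := by
  intro s hs hsδ
  have hs' : s ≠ 0 := ne_of_gt hs
  have hΓ : ∀ n : ℕ, 0 < Real.Gamma (ρ * n + 1) := fun n =>
    Real.Gamma_pos_of_pos (by positivity)
  have hexp : ∀ t : ℝ, Real.exp (-t / s) = Real.exp (-(1 / s * t)) := by
    intro t; congr 1; ring
  set f : ℕ → ℝ → ℝ := fun n t =>
    (c n / Real.Gamma (ρ * n + 1)) * (t ^ (ρ * n) * Real.exp (-(1 / s * t))) with hf
  -- per-term integral value
  have key : ∀ n : ℕ, ∫ t in Ioi (0 : ℝ), t ^ (ρ * n) * Real.exp (-(1 / s * t))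
      = s ^ (ρ * n + 1) * Real.Gamma (ρ * n + 1) := by
    intro n
    have h := integral_rpow_mul_exp_neg_mul_Ioi (a := ρ * n + 1) (r := 1 / s)
      (by positivity) (by positivity)
    rw [add_sub_cancel_right] at h
    rw [h, one_div_one_div]
  have hint : ∀ n : ℕ, IntegrableOn (fun t : ℝ => t ^ (ρ * n) * Real.exp (-(1 / s * t)))
      (Ioi 0) := fun n => sawi_aux_integrable (lt_of_lt_of_le neg_one_lt_zero (by positivity)) (by positivity)
  have hintf : ∀ n : ℕ, IntegrableOn (f n) (Ioi 0) := fun n => (hint n).const_mul _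
  -- value of ∫ f n
  have keyf : ∀ n : ℕ, ∫ t in Ioi (0 : ℝ), f n t = c n * s ^ (ρ * n + 1) := by
    intro n
    rw [hf]
    rw [MeasureTheory.integral_const_mul, key n]
    field_simp
  -- summability of the bound
  have hsum_s : Summable (fun n : ℕ => |c n| * s ^ (ρ * n + 1)) := by
    have h1 : Summable (fun n : ℕ => |c n| * s ^ (ρ * n)) := by
      refine hsum.of_nonneg_of_le (fun n => by positivity) (fun n => ?_)
      exact mul_le_mul_of_nonneg_left
        (Real.rpow_le_rpow hs.le hsδ.le (by positivity)) (abs_nonneg _)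
    have := h1.mul_left s
    refine this.congr (fun n => ?_)
    rw [Real.rpow_add hs, Real.rpow_one]
    ring
  -- norm of f n on Ioi 0
  have hnorm : ∀ n : ℕ, ∫ t in Ioi (0 : ℝ), ‖f n t‖ = |c n| * s ^ (ρ * n + 1) := by
    intro n
    have : ∀ t ∈ Ioi (0 : ℝ), ‖f n t‖
        = (|c n| / Real.Gamma (ρ * n + 1)) * (t ^ (ρ * n) * Real.exp (-(1 / s * t))) := by
      intro t ht
      rw [hf]
      rw [Real.norm_eq_abs, abs_mul, abs_div, abs_of_pos (hΓ n), abs_mul,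
        abs_of_nonneg (Real.rpow_nonneg (le_of_lt ht) _), abs_of_pos (Real.exp_pos _)]
    rw [setIntegral_congr_fun measurableSet_Ioi this, MeasureTheory.integral_const_mul, key n]
    field_simp
  -- swap sum and integral
  have hmeas : ∀ n : ℕ, AEStronglyMeasurable (f n) (volume.restrict (Ioi 0)) :=
    fun n => (hintf n).aestronglyMeasurable
  have hbound : (∑' n : ℕ, ∫⁻ t : ℝ in Ioi 0, ‖f n t‖ₑ) ≠ ⊤ := by
    have heq : ∀ n : ℕ, (∫⁻ t : ℝ in Ioi 0, ‖f n t‖ₑ)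
        = ENNReal.ofReal (|c n| * s ^ (ρ * n + 1)) := by
      intro n
      rw [← MeasureTheory.ofReal_integral_norm_eq_lintegral_enorm (hintf n), hnorm n]
    simp_rw [heq]
    rw [← ENNReal.ofReal_tsum_of_nonneg (fun n => by positivity) hsum_s]
    exact ENNReal.ofReal_ne_top
  have hswap : ∫ t in Ioi (0 : ℝ), (∑' n : ℕ, f n t) = ∑' n : ℕ, ∫ t in Ioi (0 : ℝ), f n t :=
    integral_tsum hmeas hbound
  -- rewrite the integrand of Sawi
  have hpt : ∀ t : ℝ, (∑' n : ℕ, c n * t ^ (ρ * n) / Real.Gamma (ρ * n + 1))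
      * Real.exp (-t / s) = ∑' n : ℕ, f n t := by
    intro t
    rw [hexp t, ← tsum_mul_right]
    congr 1
    funext n
    rw [hf]
    ring
  rw [Sawi]
  simp_rw [hpt]
  rw [hswap]
  simp_rw [keyf]
  rw [← tsum_mul_left]
  congr 1
  funext n
  have : s ^ (ρ * n + 1) = s ^ (ρ * n - 1) * s ^ (2 : ℕ) := by
    rw [← Real.rpow_natCast s 2, ← Real.rpow_add hs]
    congr 1
    push_cast
    ring
  rw [this]
  field_simp
end
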